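/- Let m₁,…,m_r, n be positive integers with m = m₁+⋯+m_r ≤ n, and let h = max{k : m_i n/(k-1) ≥ ⌈m_i n/k⌉ for all i ∈ [r]}. Then the equitable chromatic number of K_{m₁,…,m_r} × Kₙ equals Σᵢ ⌈m_i n / h⌉. -/

import Mathlib

open SimpleGraph

/-- Kronecker (tensor) product of simple graphs. -/
def kronecker {α β : Type*} (G : SimpleGraph α) (H : SimpleGraph β) :
    SimpleGraph (α × β) where
  Adj p q := G.Adj p.1 q.1 ∧ H.Adj p.2 q.2
  symm := ⟨fun _ _ h => ⟨h.1.symm, h.2.symm⟩⟩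
  loopless := ⟨fun _ h => G.loopless.irrefl _ h.1⟩

/-- `G` admits an equitable `k`-coloring. -/
def EquitablyColorable {V : Type*} [Fintype V] (G : SimpleGraph V) (k : ℕ) : Prop :=
  ∃ f : G.Coloring (Fin k), ∀ i j : Fin k,
    (Finset.univ.filter fun v => f v = i).card ≤
      (Finset.univ.filter fun v => f v = j).card + 1

/-- The equitable chromatic number: the least `k` for which `G` has an
equitable `k`-coloring. -/
noncomputable def equitableChromaticNumber {V : Type*} [Fintype V]
    (G : SimpleGraph V) : ℕ :=
  sInf {k | EquitablyColorable G k}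

/-
Color classes of an equitable coloring have sizes `s` or `s + 1`. If some class meets two
parts of `K_{m₁,…,m_r}`, it lies in a single column `{v | v.2 = b}`, so `s ≤ m ≤ n`; counting
vertices then forces at least `m` colors, and `m ≥ ∑ᵢ ⌈mᵢn/h⌉` because `h ≥ n`. Otherwise every
class lies inside a part, so part `i`, of size `mᵢn`, is cut into some `kᵢ` classes of sizes
`s` or `s + 1`; then `s + 1` satisfies the condition defining `h`, whence
`kᵢ ≥ ⌈mᵢn/(s+1)⌉ ≥ ⌈mᵢn/h⌉`. Conversely, cutting part `i` by residues modulo `⌈mᵢn/h⌉` yields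
classes of sizes `h - 1` or `h`, an equitable coloring with `∑ᵢ ⌈mᵢn/h⌉` colors.
-/

open Finset

-- `(N + (t - 1)) / t` is `⌈N / t⌉` for `0 < t`.
theorem Nat.add_pred_div_le_iff {N t k : ℕ} (ht : 0 < t) :
    (N + (t - 1)) / t ≤ k ↔ N ≤ t * k := by
  rw [Nat.div_le_iff_le_mul_add_pred ht]
  omega

theorem Nat.le_mul_add_pred_div (N : ℕ) {t : ℕ} (ht : 0 < t) : N ≤ t * ((N + (t - 1)) / t) :=
  (Nat.add_pred_div_le_iff ht).1 le_rfl

theorem Nat.add_pred_div_antitone (N : ℕ) {t t' : ℕ} (ht : 0 < t) (htt' : t ≤ t') :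
    (N + (t' - 1)) / t' ≤ (N + (t - 1)) / t :=
  (Nat.add_pred_div_le_iff (ht.trans_le htt')).2
    ((Nat.le_mul_add_pred_div N ht).trans (Nat.mul_le_mul_right _ htt'))

theorem Nat.pred_mul_add_pred_div_le {N c t : ℕ} (ht : 0 < t) (hlow : c * (t - 1) ≤ N)
    (hup : N ≤ c * t) : (t - 1) * ((N + (t - 1)) / t) ≤ N :=
  calc (t - 1) * ((N + (t - 1)) / t) ≤ (t - 1) * c :=
        Nat.mul_le_mul_left _ ((Nat.add_pred_div_le_iff ht).2 (by rwa [mul_comm]))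
    _ ≤ N := by rwa [mul_comm]

theorem Nat.exists_forall_le_le_add_one {α : Type*} (a : α → ℕ) (h : ∀ i j, a i ≤ a j + 1) :
    ∃ s, ∀ i, s ≤ a i ∧ a i ≤ s + 1 := by
  refine ⟨sInf (Set.range a), fun i => ⟨Nat.sInf_le ⟨i, rfl⟩, ?_⟩⟩
  obtain ⟨j, hj⟩ := Nat.sInf_mem (Set.range_nonempty_iff_nonempty.2 ⟨i⟩)
  exact hj ▸ h i j

theorem card_filter_fin_mod_eq_mem_Icc {N c t j : ℕ} (hj : j < c) (hlow : (t - 1) * c ≤ N)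
    (hup : N ≤ t * c) : #{x : Fin N | (x : ℕ) % c = j} ∈ Set.Icc (t - 1) t := by
  have hc : 0 < c := by omega
  have hcount : #{x : Fin N | (x : ℕ) % c = j} = N / c + if j < N % c then 1 else 0 := by
    rw [← Nat.mod_eq_of_lt hj, ← Nat.count_modEq_card N hc, Nat.mod_eq_of_lt hj,
      Nat.count_eq_card_filter_range, ← Nat.Iio_eq_range, ← Fin.map_valEmbedding_univ,
      filter_map, card_map]
    simp [Nat.ModEq, Nat.mod_eq_of_lt hj]
  have hdiv_ge : t - 1 ≤ N / c := (Nat.le_div_iff_mul_le hc).2 hlow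
  have hdiv_le : N / c ≤ t := Nat.div_le_of_le_mul (by rwa [mul_comm])
  rw [Set.mem_Icc, hcount]
  split_ifs with hrem
  · have hdiv_lt : N / c < t := by
      by_contra! hge
      have := Nat.div_add_mod N c
      rw [le_antisymm hdiv_le hge] at this
      nlinarith
    omega
  · omega

theorem exists_card_fiber_bounds_of_factor {V α ι : Type*} [Fintype V] [Fintype α]
    [DecidableEq α] [Fintype ι] [DecidableEq ι] (f : V → α) (π : V → ι)
    (hπ : ∀ v w, f v = f w → π v = π w) {s : ℕ}
    (hs : ∀ a, s ≤ #{v | f v = a} ∧ #{v | f v = a} ≤ s + 1) :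
    ∃ k : ι → ℕ, ∑ i, k i ≤ Fintype.card α ∧
      ∀ i, k i * s ≤ #{v | π v = i} ∧ #{v | π v = i} ≤ k i * (s + 1) := by
  refine ⟨fun i => #(({v | π v = i} : Finset V).image f), ?_, fun i => ?_⟩
  · have hdisj : ((univ : Finset ι) : Set ι).PairwiseDisjoint
        fun i => ({v | π v = i} : Finset V).image f := by
      intro i _ i' _ hii'
      simp only [Function.onFun, Finset.disjoint_left, mem_image, mem_filter_univ]
      rintro _ ⟨v, rfl, rfl⟩ ⟨w, rfl, hwv⟩
      exact hii' (hπ v w hwv.symm)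
    rw [← card_biUnion hdisj]
    exact card_le_univ _
  · have hfib : ∀ a ∈ ({v | π v = i} : Finset V).image f,
        #{v ∈ {v | π v = i} | f v = a} = #{v | f v = a} := by
      simp only [mem_image, mem_filter_univ]
      rintro _ ⟨v, rfl, rfl⟩
      congr 1
      ext w
      simp only [mem_filter, mem_univ, true_and, and_iff_right_iff_imp]
      exact fun hwv => hπ w v hwv
    rw [card_eq_sum_card_image f, sum_congr rfl hfib]
    exact ⟨by simpa using card_nsmul_le_sum _ _ s fun a _ => (hs a).1,
      by simpa using sum_le_card_nsmul _ _ (s + 1) fun a _ => (hs a).2⟩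

section EquitableColoring

variable {V : Type*} [Fintype V] {G : SimpleGraph V}

theorem equitableChromaticNumber_eq_of_forall {k : ℕ} (hk : EquitablyColorable G k)
    (hmin : ∀ k', EquitablyColorable G k' → k ≤ k') : equitableChromaticNumber G = k :=
  le_antisymm (Nat.sInf_le hk) (hmin _ (Nat.sInf_mem (s := {k | EquitablyColorable G k}) ⟨k, hk⟩))

theorem equitablyColorable_card_of_coloring {α : Type*} [Fintype α] [DecidableEq α]
    (f : G.Coloring α) (hf : ∀ a b, #{v | f v = a} ≤ #{v | f v = b} + 1) :
    EquitablyColorable G (Fintype.card α) := by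
  let e := Fintype.equivFin α
  refine ⟨Coloring.mk (fun v => e (f v)) fun hadj heq => f.valid hadj (e.injective heq),
    fun i j => ?_⟩
  show #{v | e (f v) = i} ≤ #{v | e (f v) = j} + 1
  simpa only [← e.eq_symm_apply] using hf (e.symm i) (e.symm j)

theorem equitablyColorable_sum_of_coloring {ι : Type*} [Fintype ι] [DecidableEq ι]
    (π : G.Coloring ι) (t : ℕ) (c : ι → ℕ) (hlow : ∀ i, (t - 1) * c i ≤ #{v | π v = i})
    (hup : ∀ i, #{v | π v = i} ≤ t * c i) :
    EquitablyColorable G (∑ i, c i) := by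
  let e i : {v // π v = i} ≃ Fin #{v | π v = i} :=
    Fintype.equivFinOfCardEq (Fintype.card_subtype _)
  have hc {i} (x : {v // π v = i}) : 0 < c i :=
    Nat.pos_of_mul_pos_left ((e i x).pos.trans_le (hup i))
  let F : G.Coloring (Σ i, Fin (c i)) :=
    Coloring.mk (fun v => ⟨π v, ⟨e (π v) ⟨v, rfl⟩ % c (π v), Nat.mod_lt _ (hc ⟨v, rfl⟩)⟩⟩)
      fun hadj heq => π.valid hadj (congrArg Sigma.fst heq)
  have hF_eq {v i} (j : Fin (c i)) :
      F v = ⟨i, j⟩ ↔ ∃ h : π v = i, (e i ⟨v, h⟩ : ℕ) % c i = j := by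
    constructor
    · intro H
      obtain ⟨rfl, H⟩ := Sigma.mk.inj_iff.1 H
      exact ⟨rfl, congrArg Fin.val (eq_of_heq H)⟩
    · rintro ⟨rfl, H⟩
      exact Sigma.ext rfl (heq_of_eq (Fin.ext H))
  have hF (i : ι) (j : Fin (c i)) :
      #{v | F v = ⟨i, j⟩} = #{x : Fin #{v | π v = i} | (x : ℕ) % c i = j} := by
    simp only [← Fintype.card_subtype]
    exact Fintype.card_congr <| (Equiv.subtypeEquivRight fun v => hF_eq j).trans <|
      (Equiv.subtypeSubtypeEquivSubtypeExists _ fun x => (e i x : ℕ) % c i = j).symm.trans <|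
        (e i).subtypeEquiv fun _ => Iff.rfl
  have hclass : ∀ a, #{v | F v = a} ∈ Set.Icc (t - 1) t := by
    rintro ⟨i, j⟩
    rw [hF]
    exact card_filter_fin_mod_eq_mem_Icc j.isLt (hlow i) (hup i)
  simpa using equitablyColorable_card_of_coloring F fun a b => by
    obtain ⟨ha, ha'⟩ := hclass a
    obtain ⟨hb, hb'⟩ := hclass b
    omega

end EquitableColoring

def kroneckerFst {α β : Type*} (G : SimpleGraph α) (H : SimpleGraph β) : kronecker G H →g G :=
  ⟨Prod.fst, And.left⟩

theorem card_colorClass_le_of_fst_ne {ι β α : Type*} {P : ι → Type*} [Fintype ι]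
    [∀ i, Fintype (P i)] [Fintype β] [DecidableEq α]
    (f : (kronecker (completeMultipartiteGraph P) (⊤ : SimpleGraph β)).Coloring α)
    {u w : (Σ i, P i) × β} (hfuw : f u = f w) (huw : u.1.1 ≠ w.1.1) :
    #{v | f v = f u} ≤ Fintype.card (Σ i, P i) := by
  have hsnd : ∀ x y, f x = f y → x.1.1 ≠ y.1.1 → x.2 = y.2 := fun x y hxy hne =>
    by_contra fun hne' => f.valid ⟨hne, hne'⟩ hxy
  have hcol : ∀ x, f x = f u → x.2 = u.2 := by
    intro x hx
    by_cases hxu : x.1.1 = u.1.1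
    · rw [hsnd x w (hx.trans hfuw) (hxu ▸ huw), hsnd u w hfuw huw]
    · exact hsnd x u hx hxu
  calc #{v | f v = f u} ≤ #(univ : Finset (Σ i, P i)) := by
        refine card_le_card_of_injOn Prod.fst (fun _ _ => mem_univ _) fun x hx y hy hxy => ?_
        rw [mem_coe, mem_filter_univ] at hx hy
        exact Prod.ext hxy ((hcol x hx).trans (hcol y hy).symm)
    _ = Fintype.card (Σ i, P i) := card_univ

section CompleteMultipartite

variable {ι β : Type*} {P : ι → Type*} [Fintype ι] [DecidableEq ι] [∀ i, Fintype (P i)]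
  [Fintype β]

theorem card_filter_fst_fst_eq (i : ι) :
    #{v : (Σ i, P i) × β | v.1.1 = i} = Fintype.card (P i) * Fintype.card β := by
  rw [← Fintype.card_subtype, ← Fintype.card_prod]
  exact Fintype.card_congr <|
    Equiv.prodSubtypeFstEquivSubtypeProd.trans ((Equiv.sigmaSubtype i).prodCongr (Equiv.refl β))

theorem equitablyColorable_sum_add_pred_div {h : ℕ} (hh : 0 < h ∧ ∀ i, (h - 1) *
      ((Fintype.card (P i) * Fintype.card β + (h - 1)) / h) ≤ Fintype.card (P i) * Fintype.card β) :
    EquitablyColorable (kronecker (completeMultipartiteGraph P) (⊤ : SimpleGraph β))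
      (∑ i, (Fintype.card (P i) * Fintype.card β + (h - 1)) / h) :=
  equitablyColorable_sum_of_coloring
    ((completeMultipartiteGraph.coloring P).comp (kroneckerFst _ _)) h _
    (fun i => (hh.2 i).trans_eq (card_filter_fst_fst_eq i).symm)
    (fun i => (card_filter_fst_fst_eq i).trans_le (Nat.le_mul_add_pred_div _ hh.1))

theorem sum_add_pred_div_le_of_equitablyColorable {h k : ℕ}
    (hP : Fintype.card (Σ i, P i) ≤ Fintype.card β)
    (hh : IsGreatest {t : ℕ | 0 < t ∧ ∀ i, (t - 1) * ((Fintype.card (P i) * Fintype.card β +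
      (t - 1)) / t) ≤ Fintype.card (P i) * Fintype.card β} h)
    (hk : EquitablyColorable (kronecker (completeMultipartiteGraph P) (⊤ : SimpleGraph β)) k) :
    ∑ i, (Fintype.card (P i) * Fintype.card β + (h - 1)) / h ≤ k := by
  obtain ⟨f, hf⟩ := hk
  obtain ⟨s, hs⟩ := Nat.exists_forall_le_le_add_one (fun a => #{v | f v = a}) hf
  by_cases hpure : ∀ u w, f u = f w → u.1.1 = w.1.1
  · obtain ⟨c, hc_sum, hc⟩ := exists_card_fiber_bounds_of_factor f (fun v => v.1.1) hpure hs
    simp only [card_filter_fst_fst_eq] at hc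
    have hsh : s + 1 ≤ h := hh.2 ⟨s.succ_pos, fun i => by
      simpa using Nat.pred_mul_add_pred_div_le s.succ_pos (hc i).1 (hc i).2⟩
    calc ∑ i, (Fintype.card (P i) * Fintype.card β + (h - 1)) / h
        ≤ ∑ i, (Fintype.card (P i) * Fintype.card β + s) / (s + 1) := sum_le_sum fun i _ =>
          Nat.add_pred_div_antitone _ s.succ_pos hsh
      _ ≤ ∑ i, c i := sum_le_sum fun i _ =>
          (Nat.add_pred_div_le_iff s.succ_pos).2 ((hc i).2.trans_eq (mul_comm _ _))
      _ ≤ k := by simpa using hc_sum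
  · push Not at hpure
    obtain ⟨u, w, hfuw, huw⟩ := hpure
    set M := Fintype.card (Σ i, P i)
    have hsM : s ≤ M := (hs (f u)).1.trans (card_colorClass_le_of_fst_ne f hfuw huw)
    have hcard : M * Fintype.card β ≤ k * (s + 1) := by
      rw [← Fintype.card_prod, ← card_univ,
        card_eq_sum_card_fiberwise fun v _ => mem_univ (f v)]
      simpa using sum_le_card_nsmul univ _ (s + 1) fun a _ => (hs a).2
    have hMk : M ≤ k := by nlinarith
    have hβh : Fintype.card β ≤ h := by
      rcases Nat.eq_zero_or_pos (Fintype.card β) with hβ | hβ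
      · omega
      · exact hh.2 ⟨hβ, fun i => Nat.pred_mul_add_pred_div_le hβ
          (Nat.mul_le_mul_left _ (Nat.sub_le _ _)) le_rfl⟩
    calc ∑ i, (Fintype.card (P i) * Fintype.card β + (h - 1)) / h
        ≤ ∑ i, Fintype.card (P i) := sum_le_sum fun i _ =>
          (Nat.add_pred_div_le_iff hh.1.1).2 (by rw [mul_comm]; gcongr)
      _ = M := Fintype.card_sigma.symm
      _ ≤ k := hMk

end CompleteMultipartite

theorem equitableChromaticNumber_kronecker_general {r n h : ℕ} (m : Fin r → ℕ)
    (hmn : (∑ i, m i) ≤ n)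
    (hh : IsGreatest
      {k : ℕ | 0 < k ∧ ∀ i, (k - 1) * ((m i * n + (k - 1)) / k) ≤ m i * n} h) :
    equitableChromaticNumber
        (kronecker (completeMultipartiteGraph fun i => Fin (m i))
          (⊤ : SimpleGraph (Fin n))) =
      ∑ i, (m i * n + (h - 1)) / h := by
  have hup := equitablyColorable_sum_add_pred_div (P := fun i => Fin (m i)) (β := Fin n)
    (by simpa using hh.1)
  have hlow := fun k => sum_add_pred_div_le_of_equitablyColorable (k := k)
    (P := fun i => Fin (m i)) (β := Fin n) (by simpa using hmn) (by simpa using hh)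
  simp only [Fintype.card_fin] at hup hlow
  exact equitableChromaticNumber_eq_of_forall hup hlow

/-- Theorem 3.1: for `m = m₁ + ⋯ + m_r ≤ n` and
`h = max{k : mᵢn/(k-1) ≥ ⌈mᵢn/k⌉ for all i}`, the equitable chromatic number
of `K_{m₁,…,m_r} × Kₙ` is `∑ᵢ ⌈mᵢn/h⌉`. -/
theorem equitableChromaticNumber_kronecker {r n h : ℕ} (m : Fin r → ℕ)
    (hm : ∀ i, 0 < m i) (hr : 0 < r) (hmn : (∑ i, m i) ≤ n)
    (hh : IsGreatest
      {k : ℕ | 0 < k ∧ ∀ i, (k - 1) * ((m i * n + (k - 1)) / k) ≤ m i * n} h) :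
    equitableChromaticNumber
        (kronecker (completeMultipartiteGraph fun i => Fin (m i))
          (⊤ : SimpleGraph (Fin n))) =
      ∑ i, (m i * n + (h - 1)) / h :=
  equitableChromaticNumber_kronecker_general m hmn hh
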